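/- Let Z be a nonnegative continuous semimartingale with dZ_t = β_t dt + α_t √(Z_t) dB_t, Z₀ = z ≥ 0, where |β_t| ≤ λ and λ^{−1} ≤ |α_t|² ≤ λ for λ ≥ 1. For every ε ∈ (0,1) and c > 0 there exists κ = κ(ε, c, λ) ∈ (0,1) such that for all z ≥ 0 and ρ ∈ (0,1], ℙ[sup_{0 ≤ t ≤ κρ²} |√(Z_t) − √z| ≥ cρ] ≤ ε. -/

import Mathlib

/-!
If `|√Z_t - √z| ≥ cρ` then `|Z_t - z| ≥ cρ(cρ + √z)/2 =: 2b`. On `[0, T]`, `T = κρ²`, the drift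
`∫ β` moves `Z` by at most `λT ≤ b/2`, so by continuity of `Z` the martingale part `M` exceeds `b`
at some dyadic time of `[0, T]`. Doob's maximal inequality for the submartingale `M²` bounds the
probability of this by `E[M_T²] / b²`, and `E[M_T²] = E ∫₀ᵀ α²Z ≤ λT(z + λT)` because
`E[Z_s] ≤ z + λs`. With `κ = min (1/2) (εc²/(16λ))` this is at most `ε`.
-/

open MeasureTheory Real Set Filter Topology
open scoped ENNReal

theorem le_abs_sq_sub_sq_of_le_abs_sub {u s a : ℝ} (hu : 0 ≤ u) (hs : 0 ≤ s) (ha : 0 ≤ a)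
    (hau : a ≤ |u - s|) : a * (a + s) / 2 ≤ |u ^ 2 - s ^ 2| := by
  have hsum : |u - s| ≤ u + s := abs_le.2 ⟨by linarith, by linarith⟩
  rw [show u ^ 2 - s ^ 2 = (u - s) * (u + s) by ring, abs_mul, abs_of_nonneg (add_nonneg hu hs)]
  calc a * (a + s) / 2 ≤ a * (u + s) := by nlinarith
    _ ≤ |u - s| * (u + s) := mul_le_mul_of_nonneg_right hau (add_nonneg hu hs)

theorem mul_sq_add_le {ε a s u : ℝ} (hε0 : 0 ≤ ε) (hε : ε ≤ 1) (ha : 0 ≤ a) (hs : 0 ≤ s)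
    (hu : 0 ≤ u) (hua : u ≤ ε * a ^ 2 / 16) : u * (s ^ 2 + u) ≤ ε * (a * (a + s) / 4) ^ 2 := by
  calc u * (s ^ 2 + u) ≤ ε * a ^ 2 / 16 * (s ^ 2 + a ^ 2) := by
        gcongr; nlinarith [sq_nonneg a]
    _ ≤ ε * (a * (a + s) / 4) ^ 2 := by
        have : s ^ 2 + a ^ 2 ≤ (a + s) ^ 2 := by nlinarith [mul_nonneg ha hs]
        calc ε * a ^ 2 / 16 * (s ^ 2 + a ^ 2) ≤ ε * a ^ 2 / 16 * (a + s) ^ 2 := by gcongr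
          _ = ε * (a * (a + s) / 4) ^ 2 := by ring

theorem abs_intervalIntegral_le_mul {f : ℝ → ℝ} {C t : ℝ} (hf : ∀ s, |f s| ≤ C) (ht : 0 ≤ t) :
    |∫ s in (0 : ℝ)..t, f s| ≤ C * t := by
  simpa [abs_of_nonneg ht] using
    intervalIntegral.norm_integral_le_of_norm_le_const (a := 0) (b := t) (f := f)
      fun s _ => (hf s : ‖f s‖ ≤ C)

theorem intervalIntegral_mul_le_mul {f g : ℝ → ℝ} {C t : ℝ} (ht : 0 ≤ t) (hC : 0 ≤ C)
    (hf : ∀ s, f s ≤ C) (hg : Continuous g) (hg0 : ∀ s, 0 ≤ g s) :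
    ∫ s in (0 : ℝ)..t, f s * g s ≤ C * ∫ s in (0 : ℝ)..t, g s := by
  by_cases hfg : IntervalIntegrable (fun s => f s * g s) volume 0 t
  · rw [← intervalIntegral.integral_const_mul]
    exact intervalIntegral.integral_mono_on ht hfg ((hg.intervalIntegrable _ _).const_mul C)
      fun s _ => mul_le_mul_of_nonneg_right (hf s) (hg0 s)
  · rw [intervalIntegral.integral_undef hfg]
    exact mul_nonneg hC (intervalIntegral.integral_nonneg ht fun s _ => hg0 s)

theorem natCast_mul_div_mem_Icc {T : ℝ} (hT : 0 ≤ T) {k n : ℕ} (hkn : k ≤ n) (hn : 0 < n) :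
    (k : ℝ) * (T / n) ∈ Icc 0 T := by
  refine ⟨by positivity, ?_⟩
  calc (k : ℝ) * (T / n) ≤ n * (T / n) := by gcongr
    _ = T := mul_div_cancel₀ _ (by positivity)

theorem abs_sub_mul_sub_intervalIntegral_le {f : ℝ → ℝ} {a b η : ℝ} (hab : a ≤ b)
    (hf : IntervalIntegrable f volume a b) (hfa : ∀ s ∈ Icc a b, |f a - f s| ≤ η) :
    |(b - a) * f a - ∫ s in a..b, f s| ≤ η * (b - a) := by
  have hconst : (b - a) * f a = ∫ _ in a..b, f a := by
    rw [intervalIntegral.integral_const, smul_eq_mul]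
  rw [← Real.norm_eq_abs, hconst, ← intervalIntegral.integral_sub intervalIntegrable_const hf]
  refine (intervalIntegral.norm_integral_le_of_norm_le_const fun s hs => ?_).trans_eq
    (by rw [abs_of_nonneg (sub_nonneg.2 hab)])
  rw [uIoc_of_le hab] at hs
  exact hfa s ⟨hs.1.le, hs.2⟩

theorem tendsto_riemannSum_intervalIntegral {f : ℝ → ℝ} (hf : Continuous f) {T : ℝ}
    (hT : 0 ≤ T) :
    Tendsto (fun n : ℕ => ∑ k ∈ Finset.range n, T / n * f (k * (T / n))) atTop
      (𝓝 (∫ s in (0 : ℝ)..T, f s)) := by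
  rw [Metric.tendsto_atTop]
  intro η hη
  obtain ⟨δ, hδ, hfδ⟩ := Metric.uniformContinuousOn_iff.1
    ((isCompact_Icc (a := 0) (b := T)).uniformContinuousOn_of_continuous hf.continuousOn)
    (η / (T + 1)) (by positivity)
  obtain ⟨N, hN⟩ := exists_nat_gt (T / δ)
  refine ⟨N + 1, fun n hn => ?_⟩
  have hn0 : (0 : ℝ) < n := by exact_mod_cast (Nat.succ_pos N).trans_le hn
  set h := T / n with hh_def
  have hh : 0 ≤ h := by positivity
  have hhδ : h < δ := by
    rw [hh_def, div_lt_iff₀ hn0]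
    rw [div_lt_iff₀ hδ] at hN
    have : (N : ℝ) + 1 ≤ n := by exact_mod_cast hn
    nlinarith
  have hgrid : ∀ k ≤ n, (k : ℝ) * h ∈ Icc 0 T := fun k hk =>
    natCast_mul_div_mem_Icc hT hk (by exact_mod_cast hn0)
  have hsplit :
      ∑ k ∈ Finset.range n, ∫ s in k * h..(k + 1 : ℕ) * h, f s = ∫ s in (0 : ℝ)..T, f s := by
    rw [intervalIntegral.sum_integral_adjacent_intervals fun k _ => hf.intervalIntegrable _ _]
    congr 1
    · simp
    · rw [hh_def]; field_simp
  have hpiece : ∀ k ∈ Finset.range n,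
      ‖h * f (k * h) - ∫ s in k * h..(k + 1 : ℕ) * h, f s‖ ≤ η / (T + 1) * h := by
    intro k hk
    have hk : k < n := Finset.mem_range.1 hk
    have hlen : ((k + 1 : ℕ) : ℝ) * h - k * h = h := by push_cast; ring
    have hle : (k : ℝ) * h ≤ (k + 1 : ℕ) * h := by rw [← sub_nonneg, hlen]; exact hh
    have := abs_sub_mul_sub_intervalIntegral_le hle (hf.intervalIntegrable _ _) fun s hs =>
      (hfδ _ (hgrid k hk.le) s ⟨(hgrid k hk.le).1.trans hs.1, hs.2.trans (hgrid (k + 1) hk).2⟩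
        (by rw [Real.dist_eq, abs_sub_lt_iff]; constructor <;> linarith [hs.1, hs.2])).le
    rwa [hlen] at this
  rw [Real.dist_eq, ← hsplit, ← Finset.sum_sub_distrib]
  calc |∑ k ∈ Finset.range n, (h * f (k * h) - ∫ s in k * h..(k + 1 : ℕ) * h, f s)|
      ≤ ∑ _k ∈ Finset.range n, η / (T + 1) * h :=
        (norm_sum_le _ _).trans (Finset.sum_le_sum hpiece)
    _ = η * (T / (T + 1)) := by
      rw [Finset.sum_const, Finset.card_range, nsmul_eq_mul, hh_def]; field_simp
    _ < η := mul_lt_of_lt_one_right hη ((div_lt_one (by linarith)).2 (by linarith))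

theorem exists_dyadic_near {T t δ : ℝ} (hT : 0 < T) (ht : t ∈ Icc 0 T) (hδ : 0 < δ) :
    ∃ n k : ℕ, k ≤ 2 ^ n ∧ |k * (T / 2 ^ n) - t| < δ := by
  obtain ⟨n, hn⟩ := exists_pow_lt_of_lt_one (div_pos hδ hT) (by norm_num : (1 / 2 : ℝ) < 1)
  have hh : 0 < T / 2 ^ n := by positivity
  have hhδ : T / 2 ^ n < δ := by
    rw [lt_div_iff₀ hT] at hn
    linarith [show T / 2 ^ n = (1 / 2) ^ n * T by rw [one_div_pow]; ring]
  refine ⟨n, ⌊t / (T / 2 ^ n)⌋₊, Nat.floor_le_of_le ?_, ?_⟩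
  · rw [div_le_iff₀ hh]
    have : (2 : ℝ) ^ n * (T / 2 ^ n) = T := by field_simp
    push_cast
    linarith [ht.2]
  · have h1 := Nat.floor_le (div_nonneg ht.1 hh.le)
    have h2 := Nat.lt_floor_add_one (t / (T / 2 ^ n))
    rw [le_div_iff₀ hh] at h1
    rw [div_lt_iff₀ hh] at h2
    rw [abs_sub_lt_iff]
    constructor <;> nlinarith

theorem dyadic_mem_Icc {T : ℝ} (hT : 0 ≤ T) {n k : ℕ} (hk : k ≤ 2 ^ n) :
    (k : ℝ) * (T / 2 ^ n) ∈ Icc 0 T := by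
  exact_mod_cast natCast_mul_div_mem_Icc hT hk (by positivity)

theorem exists_dyadic_le_abs {f m : ℝ → ℝ} {T t z b : ℝ} (hT : 0 < T) (hf : Continuous f)
    (ht : t ∈ Icc 0 T) (hb : 0 < b) (hft : 2 * b ≤ |f t - z|)
    (hfm : ∀ s ∈ Icc 0 T, |f s - z - m s| ≤ b / 2) :
    ∃ n k : ℕ, k ≤ 2 ^ n ∧ b ≤ |m (k * (T / 2 ^ n))| := by
  obtain ⟨δ, hδ, hfδ⟩ := Metric.continuousAt_iff.1 hf.continuousAt (b / 2) (by positivity)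
  obtain ⟨n, k, hk, hkt⟩ := exists_dyadic_near hT ht hδ
  refine ⟨n, k, hk, ?_⟩
  set q := (k : ℝ) * (T / 2 ^ n)
  have hfq : |f t - f q| < b / 2 := by
    rw [abs_sub_comm]; exact hfδ (by rwa [Real.dist_eq])
  have hsplit := abs_add_three (f t - f q) (f q - z - m q) (m q)
  rw [show f t - f q + (f q - z - m q) + m q = f t - z by ring] at hsplit
  linarith [hfm q (dyadic_mem_Icc hT.le hk)]

section Stochastic

variable {Ω : Type*} {mΩ : MeasurableSpace Ω} {P : Measure Ω}

theorem integral_riemannSum_le {Y : ℝ → Ω → ℝ} {T C : ℝ} (hT : 0 ≤ T) (hC : 0 ≤ C)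
    (hY : ∀ s ∈ Icc 0 T, Integrable (Y s) P) (hEY : ∀ s ∈ Icc 0 T, ∫ ω, Y s ω ∂P ≤ C) (n : ℕ) :
    ∫ ω, ∑ k ∈ Finset.range n, T / n * Y (k * (T / n)) ω ∂P ≤ T * C := by
  rcases n.eq_zero_or_pos with rfl | hn
  · simpa using mul_nonneg hT hC
  have hgrid : ∀ k ∈ Finset.range n, (k : ℝ) * (T / n) ∈ Icc 0 T := fun k hk =>
    natCast_mul_div_mem_Icc hT (Finset.mem_range.1 hk).le hn
  rw [integral_finsetSum _ fun k hk => (hY _ (hgrid k hk)).const_mul _]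
  calc ∑ k ∈ Finset.range n, ∫ ω, T / n * Y (k * (T / n)) ω ∂P
      ≤ ∑ _k ∈ Finset.range n, T / n * C := Finset.sum_le_sum fun k hk => by
        rw [integral_const_mul]
        exact mul_le_mul_of_nonneg_left (hEY _ (hgrid k hk)) (by positivity)
    _ = T * C := by
      rw [Finset.sum_const, Finset.card_range, nsmul_eq_mul, ← mul_assoc,
        mul_div_cancel₀ _ (by positivity)]

-- No joint measurability of `Z` is assumed, so Tonelli is unavailable; Riemann sums of the
-- measurable upper bounds `Y` and Fatou's lemma replace it.
theorem lintegral_ofReal_intervalIntegral_le {Z Y : ℝ → Ω → ℝ} {T C : ℝ} (hT : 0 ≤ T)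
    (hZ : ∀ ω, Continuous fun s => Z s ω) (hZ0 : ∀ s ω, 0 ≤ Z s ω)
    (hZY : ∀ s ∈ Icc 0 T, ∀ ω, Z s ω ≤ Y s ω) (hY : ∀ s ∈ Icc 0 T, Integrable (Y s) P)
    (hEY : ∀ s ∈ Icc 0 T, ∫ ω, Y s ω ∂P ≤ C) :
    ∫⁻ ω, ENNReal.ofReal (∫ s in (0 : ℝ)..T, Z s ω) ∂P ≤ ENNReal.ofReal (T * C) := by
  set R : ℕ → Ω → ℝ := fun n ω => ∑ k ∈ Finset.range n, T / n * Y (k * (T / n)) ω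
  have hgrid : ∀ n, ∀ k ∈ Finset.range n, (k : ℝ) * (T / n) ∈ Icc 0 T := fun n k hk =>
    have hkn := Finset.mem_range.1 hk
    natCast_mul_div_mem_Icc hT hkn.le (k.zero_le.trans_lt hkn)
  have hC : 0 ≤ C := (integral_nonneg fun ω => (hZ0 0 ω).trans (hZY 0 ⟨le_rfl, hT⟩ ω)).trans
    (hEY 0 ⟨le_rfl, hT⟩)
  have hR_int : ∀ n, Integrable (R n) P := fun n =>
    integrable_finsetSum _ fun k hk => (hY _ (hgrid n k hk)).const_mul _
  have hR_nonneg : ∀ n ω, 0 ≤ R n ω := fun n ω => Finset.sum_nonneg fun k hk =>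
    mul_nonneg (by positivity) ((hZ0 _ ω).trans (hZY _ (hgrid n k hk) ω))
  have hpath : ∀ ω, ENNReal.ofReal (∫ s in (0 : ℝ)..T, Z s ω)
      ≤ liminf (fun n => ENNReal.ofReal (R n ω)) atTop := by
    intro ω
    rw [← ((ENNReal.continuous_ofReal.tendsto _).comp
      (tendsto_riemannSum_intervalIntegral (hZ ω) hT)).liminf_eq]
    refine liminf_le_liminf (Eventually.of_forall fun n => ENNReal.ofReal_le_ofReal ?_)
    exact Finset.sum_le_sum fun k hk =>
      mul_le_mul_of_nonneg_left (hZY _ (hgrid n k hk) ω) (by positivity)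
  calc ∫⁻ ω, ENNReal.ofReal (∫ s in (0 : ℝ)..T, Z s ω) ∂P
      ≤ ∫⁻ ω, liminf (fun n => ENNReal.ofReal (R n ω)) atTop ∂P := lintegral_mono hpath
    _ ≤ liminf (fun n => ∫⁻ ω, ENNReal.ofReal (R n ω) ∂P) atTop :=
      lintegral_liminf_le' fun n => (hR_int n).aemeasurable.ennreal_ofReal
    _ ≤ ENNReal.ofReal (T * C) := by
      refine (liminf_le_liminf (Eventually.of_forall fun n => ?_)).trans_eq (liminf_const _)
      rw [← ofReal_integral_eq_lintegral_ofReal (hR_int n) (Eventually.of_forall (hR_nonneg n))]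
      exact ENNReal.ofReal_le_ofReal (integral_riemannSum_le hT hC hY hEY n)

theorem setOf_exists_le_abs_sqrt_sub_subset {Z M β : ℝ → Ω → ℝ} {lam z T a : ℝ} (hT : 0 < T)
    (ha : 0 < a) (hz : 0 ≤ z) (hZcont : ∀ ω, Continuous fun s => Z s ω)
    (hZpos : ∀ s ω, 0 ≤ Z s ω) (hβ : ∀ s ω, |β s ω| ≤ lam)
    (hZeq : ∀ s, 0 ≤ s → ∀ ω, Z s ω = z + (∫ r in (0:ℝ)..s, β r ω) + M s ω)
    (hdrift : lam * T ≤ a * (a + √z) / 8) :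
    {ω | ∃ t ∈ Icc 0 T, a ≤ |√(Z t ω) - √z|}
      ⊆ ⋃ n : ℕ, {ω | ∃ k : ℕ, k ≤ 2 ^ n ∧ a * (a + √z) / 4 ≤ |M (k * (T / 2 ^ n)) ω|} := by
  rintro ω ⟨t, ht, hat⟩
  refine mem_iUnion.2 (exists_dyadic_le_abs (m := (M · ω)) (z := z) hT (hZcont ω) ht
    (by positivity) ?_ fun s hs => ?_)
  · have := le_abs_sq_sub_sq_of_le_abs_sub (sqrt_nonneg _) (sqrt_nonneg z) ha.le hat
    rw [sq_sqrt (hZpos t ω), sq_sqrt hz] at this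
    linarith
  · rw [hZeq s hs.1 ω, show z + (∫ r in (0:ℝ)..s, β r ω) + M s ω - z - M s ω
      = ∫ r in (0:ℝ)..s, β r ω by ring]
    calc _ ≤ lam * s := abs_intervalIntegral_le_mul (hβ · ω) hs.1
      _ ≤ lam * T := mul_le_mul_of_nonneg_left hs.2 ((abs_nonneg _).trans (hβ 0 ω))
      _ ≤ _ := by linarith

namespace MeasureTheory

def Filtration.comp {ι κ : Type*} [Preorder ι] [Preorder κ] (ℱ : Filtration ι mΩ) {τ : κ → ι}
    (hτ : Monotone τ) : Filtration κ mΩ where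
  seq k := ℱ (τ k)
  mono' _ _ hkl := ℱ.mono (hτ hkl)
  le' k := ℱ.le (τ k)

section Preorder

variable {ι : Type*} [Preorder ι] {ℱ : Filtration ι mΩ} {M : ι → Ω → ℝ} [IsFiniteMeasure P]

theorem Martingale.integral_eq_of_le (hM : Martingale M ℱ P) {s t : ι} (hst : s ≤ t) :
    ∫ ω, M s ω ∂P = ∫ ω, M t ω ∂P := by
  simpa using hM.setIntegral_eq hst MeasurableSet.univ

theorem Martingale.sq_ae_le_condExp_sq (hM : Martingale M ℱ P) {s t : ι}
    (hst : s ≤ t) (ht : MemLp (M t) 2 P) :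
    (fun ω => M s ω ^ 2) ≤ᵐ[P] P[fun ω => M t ω ^ 2 | ℱ s] := by
  have hvar : (0 : Ω → ℝ) ≤ᵐ[P] ProbabilityTheory.condVar (ℱ s) (M t) P :=
    condExp_nonneg (Eventually.of_forall fun ω => sq_nonneg _)
  filter_upwards [hvar, ProbabilityTheory.condVar_ae_eq_condExp_sq_sub_sq_condExp (ℱ.le s) ht,
    hM.condExp_ae_eq hst] with ω hω hω' hMs
  simp only [hω', Pi.sub_apply, Pi.pow_apply, Pi.zero_apply, hMs] at hω
  exact sub_nonneg.1 hω

theorem Martingale.submartingale_sq_comp (hM : Martingale M ℱ P)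
    {κ : Type*} [Preorder κ] {τ : κ → ι} (hτ : Monotone τ) (hL2 : ∀ k, MemLp (M (τ k)) 2 P) :
    Submartingale (fun k ω => M (τ k) ω ^ 2) (ℱ.comp hτ) P :=
  ⟨fun k => (hM.stronglyAdapted (τ k)).pow 2,
    fun _ _ hkl => hM.sq_ae_le_condExp_sq (hτ hkl) (hL2 _),
    fun k => (hL2 k).integrable_sq⟩

theorem Martingale.measure_exists_le_abs_le (hM : Martingale M ℱ P)
    {τ : ℕ → ι} (hτ : Monotone τ) (hL2 : ∀ k, MemLp (M (τ k)) 2 P) {b : ℝ} (hb : 0 < b) (N : ℕ) :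
    P {ω | ∃ k ≤ N, b ≤ |M (τ k) ω|} ≤ ENNReal.ofReal ((∫ ω, M (τ N) ω ^ 2 ∂P) / b ^ 2) := by
  set S := {ω | ((b ^ 2).toNNReal : ℝ) ≤
    (Finset.range (N + 1)).sup' Finset.nonempty_range_add_one fun k => M (τ k) ω ^ 2}
  have hsub : {ω | ∃ k ≤ N, b ≤ |M (τ k) ω|} ⊆ S := by
    rintro ω ⟨k, hk, hbk⟩
    rw [Set.mem_ofPred_eq, Real.coe_toNNReal _ (sq_nonneg b)]
    refine le_trans ?_ (Finset.le_sup' (fun k => M (τ k) ω ^ 2) (Finset.mem_range_succ_iff.2 hk))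
    simpa [sq_abs] using pow_le_pow_left₀ hb.le hbk 2
  have hdoob := maximal_ineq (hM.submartingale_sq_comp hτ hL2) (fun k ω => sq_nonneg _)
    (ε := (b ^ 2).toNNReal) N
  have hS : ∫ ω in S, M (τ N) ω ^ 2 ∂P ≤ ∫ ω, M (τ N) ω ^ 2 ∂P :=
    setIntegral_le_integral (hL2 N).integrable_sq (Eventually.of_forall fun ω => sq_nonneg _)
  calc P {ω | ∃ k ≤ N, b ≤ |M (τ k) ω|} ≤ P S := measure_mono hsub
    _ ≤ ENNReal.ofReal (∫ ω, M (τ N) ω ^ 2 ∂P) / ENNReal.ofReal (b ^ 2) := by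
      rw [ENNReal.le_div_iff_mul_le (Or.inl (by simpa using hb.ne'))
        (Or.inl ENNReal.ofReal_ne_top), mul_comm]
      exact hdoob.trans (ENNReal.ofReal_le_ofReal hS)
    _ = ENNReal.ofReal ((∫ ω, M (τ N) ω ^ 2 ∂P) / b ^ 2) :=
      (ENNReal.ofReal_div_of_pos (by positivity)).symm

end Preorder

variable {ℱ : Filtration ℝ mΩ}

theorem Martingale.measure_iUnion_dyadic_le [IsFiniteMeasure P] {M : ℝ → Ω → ℝ}
    (hM : Martingale M ℱ P) {T b : ℝ} (hT : 0 ≤ T) (hb : 0 < b)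
    (hL2 : ∀ t ∈ Icc 0 T, MemLp (M t) 2 P) :
    P (⋃ n : ℕ, {ω | ∃ k : ℕ, k ≤ 2 ^ n ∧ b ≤ |M (k * (T / 2 ^ n)) ω|})
      ≤ ENNReal.ofReal ((∫ ω, M T ω ^ 2 ∂P) / b ^ 2) := by
  have hmono : Monotone fun n : ℕ => {ω | ∃ k : ℕ, k ≤ 2 ^ n ∧ b ≤ |M (k * (T / 2 ^ n)) ω|} := by
    refine monotone_nat_of_le_succ fun n ω ⟨k, hk, hbk⟩ => ⟨2 * k, by rw [pow_succ]; omega, ?_⟩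
    have hgrid : ((2 * k : ℕ) : ℝ) * (T / 2 ^ (n + 1)) = k * (T / 2 ^ n) := by
      push_cast; rw [pow_succ]; field_simp
    rwa [hgrid]
  rw [hmono.measure_iUnion]
  refine iSup_le fun n => ?_
  -- clamped at `T`, so that all times stay in `[0, T]`, where `M` is square integrable
  set τ : ℕ → ℝ := fun j => min (j * (T / 2 ^ n)) T
  have hτ : Monotone τ := fun i j hij => min_le_min_right _ (by gcongr)
  have hτk : ∀ k ≤ 2 ^ n, τ k = k * (T / 2 ^ n) := fun k hk =>
    min_eq_left (dyadic_mem_Icc hT hk).2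
  have hτN : τ (2 ^ n) = T := by
    rw [hτk _ le_rfl]; push_cast; exact mul_div_cancel₀ _ (by positivity)
  have hevent : {ω | ∃ k : ℕ, k ≤ 2 ^ n ∧ b ≤ |M (k * (T / 2 ^ n)) ω|}
      = {ω | ∃ k ≤ 2 ^ n, b ≤ |M (τ k) ω|} := by
    ext ω
    exact exists_congr fun k => and_congr_right fun hk => by rw [hτk k hk]
  rw [hevent, ← hτN]
  exact hM.measure_exists_le_abs_le hτ
    (fun k => hL2 _ ⟨le_min (by positivity) hT, min_le_right _ _⟩) hb (2 ^ n)

theorem memLp_two_and_integral_sq_le_of_martingale_sq_sub [IsFiniteMeasure P]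
    {M A : ℝ → Ω → ℝ} {t K : ℝ}
    (hMt : AEStronglyMeasurable (M t) P) (hN : Martingale (fun t ω => M t ω ^ 2 - A t ω) ℱ P)
    (hM0 : ∀ ω, M 0 ω = 0) (hA0 : ∀ ω, A 0 ω = 0) (ht : 0 ≤ t) (hA : ∀ ω, 0 ≤ A t ω)
    (hK : 0 ≤ K) (hAK : ∫⁻ ω, ENNReal.ofReal (A t ω) ∂P ≤ ENNReal.ofReal K) :
    MemLp (M t) 2 P ∧ ∫ ω, M t ω ^ 2 ∂P ≤ K := by
  have hNt : Integrable (fun ω => M t ω ^ 2 - A t ω) P := hN.integrable t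
  have hAm : AEStronglyMeasurable (A t) P := by
    convert (hMt.pow 2).sub hNt.aestronglyMeasurable using 1
    funext ω; simp
  have hAint : Integrable (A t) P := ⟨hAm, by
    rw [hasFiniteIntegral_iff_ofReal (Eventually.of_forall hA)]
    exact hAK.trans_lt ENNReal.ofReal_lt_top⟩
  have hsq : (fun ω => M t ω ^ 2) = fun ω => (M t ω ^ 2 - A t ω) + A t ω := by
    funext ω; ring
  have hEN : ∫ ω, M t ω ^ 2 - A t ω ∂P = 0 := by
    rw [← hN.integral_eq_of_le ht]
    simp [hM0, hA0]
  refine ⟨(memLp_two_iff_integrable_sq hMt).2 (hsq ▸ hNt.add hAint), ?_⟩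
  rw [hsq, integral_add hNt hAint, hEN, zero_add,
    integral_eq_lintegral_of_nonneg_ae (Eventually.of_forall hA) hAm]
  exact ENNReal.toReal_le_of_le_ofReal hK hAK

theorem martingalePart_memLp_two_and_integral_sq_le [IsProbabilityMeasure P] {Z M α β : ℝ → Ω → ℝ}
    {lam z t : ℝ} (hlam : 0 ≤ lam) (hz : 0 ≤ z) (hZcont : ∀ ω, Continuous fun s => Z s ω)
    (hZpos : ∀ s ω, 0 ≤ Z s ω) (hβ : ∀ s ω, |β s ω| ≤ lam) (hα : ∀ s ω, |α s ω| ^ 2 ≤ lam)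
    (hZeq : ∀ s, 0 ≤ s → ∀ ω, Z s ω = z + (∫ r in (0:ℝ)..s, β r ω) + M s ω)
    (hM : Martingale M ℱ P)
    (hN : Martingale (fun s ω => M s ω ^ 2 - ∫ r in (0:ℝ)..s, α r ω ^ 2 * Z r ω) ℱ P)
    (hM0 : ∀ ω, M 0 ω = 0) (ht : 0 ≤ t) :
    MemLp (M t) 2 P ∧ ∫ ω, M t ω ^ 2 ∂P ≤ lam * t * (z + lam * t) := by
  have hZM : ∀ s ∈ Icc 0 t, ∀ ω, lam * Z s ω ≤ lam * (z + lam * s + M s ω) := by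
    intro s hs ω
    have hβs := abs_le.1 (abs_intervalIntegral_le_mul (hβ · ω) hs.1)
    rw [hZeq s hs.1 ω]
    gcongr
    linarith
  have hEM : ∀ s ∈ Icc 0 t, ∫ ω, lam * (z + lam * s + M s ω) ∂P ≤ lam * (z + lam * t) := by
    intro s hs
    rw [integral_const_mul, integral_add (integrable_const _) (hM.integrable s),
      ← hM.integral_eq_of_le hs.1]
    simp only [hM0, integral_const, probReal_univ, smul_eq_mul, one_mul, add_zero]
    gcongr
    exact hs.2
  have hFatou := lintegral_ofReal_intervalIntegral_le (P := P) ht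
    (fun ω => (hZcont ω).const_mul lam) (fun s ω => mul_nonneg hlam (hZpos s ω)) hZM
    (fun s _ => ((integrable_const _).add (hM.integrable s)).const_mul lam) hEM
  have hA : ∀ ω, ∫ r in (0:ℝ)..t, α r ω ^ 2 * Z r ω ≤ ∫ r in (0:ℝ)..t, lam * Z r ω := by
    intro ω
    rw [intervalIntegral.integral_const_mul]
    exact intervalIntegral_mul_le_mul ht hlam (fun r => by simpa [sq_abs] using hα r ω)
      (hZcont ω) (hZpos · ω)
  have hbound := memLp_two_and_integral_sq_le_of_martingale_sq_sub (K := t * (lam * (z + lam * t)))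
    (A := fun s ω => ∫ r in (0:ℝ)..s, α r ω ^ 2 * Z r ω)
    (hM.integrable t).aestronglyMeasurable hN hM0 (fun ω => by simp) ht
    (fun ω => intervalIntegral.integral_nonneg ht fun r _ => mul_nonneg (sq_nonneg _) (hZpos r ω))
    (by positivity) ((lintegral_mono fun ω => ENNReal.ofReal_le_ofReal (hA ω)).trans hFatou)
  exact ⟨hbound.1, hbound.2.trans_eq (by ring)⟩

end MeasureTheory

end Stochastic

/-- The equation `dZ_t = β_t dt + α_t √Z_t dB_t` is encoded by `Z_t = z + ∫₀ᵗ β_s ds + M_t`, where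
`M` is a martingale with `M_t² - ∫₀ᵗ α_s² Z_s ds` a martingale. -/
theorem sqrt_process_modulus (lam : ℝ) (hlam : 1 ≤ lam)
    (ε c : ℝ) (hε : ε ∈ Set.Ioo (0:ℝ) 1) (hc : 0 < c) :
    ∃ κ ∈ Set.Ioo (0:ℝ) 1, ∀ {Ω : Type} {mΩ : MeasurableSpace Ω} (P : Measure Ω),
      IsProbabilityMeasure P → ∀ (ℱ : Filtration ℝ mΩ)
      (Z M : ℝ → Ω → ℝ) (α β : ℝ → Ω → ℝ) (z ρ : ℝ),
      (0 ≤ z) → (ρ ∈ Set.Ioc (0:ℝ) 1) →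
      (∀ ω, Continuous fun t => Z t ω) →
      (∀ t ω, 0 ≤ Z t ω) →
      (∀ t ω, |β t ω| ≤ lam) →
      (∀ t ω, lam⁻¹ ≤ |α t ω| ^ 2 ∧ |α t ω| ^ 2 ≤ lam) →
      (∀ t, 0 ≤ t → ∀ ω, Z t ω = z + (∫ s in (0:ℝ)..t, β s ω) + M t ω) →
      Martingale M ℱ P →
      Martingale (fun t ω => (M t ω) ^ 2 - ∫ s in (0:ℝ)..t, (α s ω) ^ 2 * Z s ω) ℱ P →
      (∀ ω, M 0 ω = 0) →
      P {ω | ∃ t ∈ Set.Icc (0:ℝ) (κ * ρ ^ 2),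
          c * ρ ≤ |Real.sqrt (Z t ω) - Real.sqrt z|}
        ≤ ENNReal.ofReal ε := by
  obtain ⟨hε0, hε1⟩ := hε
  have hlam0 : 0 < lam := by linarith
  refine ⟨min (1 / 2) (ε * c ^ 2 / (16 * lam)), ⟨by positivity,
    (min_le_left _ _).trans_lt (by norm_num)⟩, ?_⟩
  intro Ω mΩ P hP ℱ Z M α β z ρ hz hρ hZcont hZpos hβ hα hZeq hM hN hM0
  set T := min (1 / 2) (ε * c ^ 2 / (16 * lam)) * ρ ^ 2
  have ha : 0 < c * ρ := mul_pos hc hρ.1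
  have hT : 0 < T := mul_pos (lt_min (by norm_num) (by positivity)) (pow_pos hρ.1 2)
  have hlamT : lam * T ≤ ε * (c * ρ) ^ 2 / 16 := by
    calc lam * T ≤ lam * (ε * c ^ 2 / (16 * lam) * ρ ^ 2) :=
          mul_le_mul_of_nonneg_left
            (mul_le_mul_of_nonneg_right (min_le_right _ _) (sq_nonneg ρ)) hlam0.le
      _ = ε * (c * ρ) ^ 2 / 16 := by field_simp
  have hdrift : lam * T ≤ c * ρ * (c * ρ + √z) / 8 := by
    nlinarith [mul_nonneg ha.le (sqrt_nonneg z)]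
  have hmoment := fun t (ht : 0 ≤ t) => martingalePart_memLp_two_and_integral_sq_le hlam0.le hz
    hZcont hZpos hβ (fun s ω => (hα s ω).2) hZeq hM hN hM0 ht
  set b := c * ρ * (c * ρ + √z) / 4
  calc P {ω | ∃ t ∈ Icc 0 T, c * ρ ≤ |√(Z t ω) - √z|}
      ≤ P (⋃ n : ℕ, {ω | ∃ k : ℕ, k ≤ 2 ^ n ∧ b ≤ |M (k * (T / 2 ^ n)) ω|}) :=
        measure_mono (setOf_exists_le_abs_sqrt_sub_subset hT ha hz hZcont hZpos hβ hZeq hdrift)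
    _ ≤ ENNReal.ofReal ((∫ ω, M T ω ^ 2 ∂P) / b ^ 2) :=
        hM.measure_iUnion_dyadic_le hT.le (by positivity) fun t ht => (hmoment t ht.1).1
    _ ≤ ENNReal.ofReal ε := by
        refine ENNReal.ofReal_le_ofReal ((div_le_iff₀ (by positivity)).2
          ((hmoment T hT.le).2.trans ?_))
        simpa [sq_sqrt hz] using
          mul_sq_add_le hε0.le hε1.le ha.le (sqrt_nonneg z) (by positivity) hlamT
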